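/- Let p be a prime, G a finite group, and P a Sylow p-subgroup of G. Let V = S₁ × S₂ × ⋯ × S_r be a normal subgroup of G that is an (internal) direct product of nonabelian simple groups S₁, …, S_r each of order divisible by p, and consider the action of G by conjugation permuting the set {S₁, …, S_r}. Let N be a normal subgroup of P of exponent p^e, and suppose an element g ∈ N has an orbit of length exactly p^e on {S₁, …, S_r}. Then this orbit is invariant under the action of N. -/

import Mathlib

open Subgroup

universe u

section Preamble

/-- The derived series of a subgroup `H` of `G`, viewed as subgroups of `G`:
`H^{(0)} = H`, `H^{(n+1)} = [H^{(n)}, H^{(n)}]`. -/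
def subgroupDerivedSeries {G : Type u} [Group G] (H : Subgroup G) : ℕ → Subgroup G
  | 0 => H
  | n + 1 => ⁅subgroupDerivedSeries H n, subgroupDerivedSeries H n⁆

/-- The image of a subgroup under conjugation by `g`. -/
def conjSubgroup {G : Type u} [Group G] (g : G) (S : Subgroup G) : Subgroup G :=
  S.map (MulAut.conj g).toMonoidHom

/-- The subgroup generated by the `k`-th powers of the elements of `S`. -/
def powerSubgroup {G : Type u} [Group G] (S : Subgroup G) (k : ℕ) : Subgroup G :=
  Subgroup.closure ((fun x => x ^ k) '' (S : Set G))

/-- A group is a (nonempty, internal) direct product of nonabelian simple subgroups. -/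
def IsProdOfNonabelianSimples (Q : Type u) [Group Q] : Prop :=
  ∃ (ι : Type) (S : ι → Subgroup Q), Nonempty ι ∧
    (∀ i, (S i).Normal) ∧ (∀ i, IsSimpleGroup (S i)) ∧
    (∀ i, ∃ a b : S i, a * b ≠ b * a) ∧
    iSupIndep S ∧ (⨆ i, S i) = ⊤

/-- A group is a (nonempty, internal) direct product of nonabelian simple subgroups,
each of order divisible by `p`. -/
def IsProdOfNonabelianSimplesDiv (p : ℕ) (Q : Type u) [Group Q] : Prop :=
  ∃ (ι : Type) (S : ι → Subgroup Q), Nonempty ι ∧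
    (∀ i, (S i).Normal) ∧ (∀ i, IsSimpleGroup (S i)) ∧
    (∀ i, ∃ a b : S i, a * b ≠ b * a) ∧ (∀ i, p ∣ Nat.card (S i)) ∧
    iSupIndep S ∧ (⨆ i, S i) = ⊤

/-- A group is `p`-soluble if it has a normal series each of whose factors is
either a `p`-group or a `p'`-group (stated elementwise on the factors). -/
def IsPSoluble (p : ℕ) (G : Type u) [Group G] : Prop :=
  ∃ (n : ℕ) (σ : ℕ → Subgroup G), σ 0 = ⊥ ∧ σ n = ⊤ ∧
    (∀ i, σ i ≤ σ (i + 1)) ∧ (∀ i, (σ i).Normal) ∧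
    ∀ i < n, (∀ x ∈ σ (i + 1), ∃ k : ℕ, x ^ p ^ k ∈ σ i) ∨
      (∀ x ∈ σ (i + 1), ∃ k : ℕ, 0 < k ∧ Nat.Coprime k p ∧ x ^ k ∈ σ i)

/-- `G` has a normal series each of whose factors is a `p`-group or a `p'`-group,
with exactly `l` `p`-group factors (the factors labelled by `c`). -/
def HasPSeriesOfLength (p : ℕ) (G : Type u) [Group G] (l : ℕ) : Prop :=
  ∃ (n : ℕ) (σ : ℕ → Subgroup G) (c : ℕ → Bool), σ 0 = ⊥ ∧ σ n = ⊤ ∧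
    (∀ i, σ i ≤ σ (i + 1)) ∧ (∀ i, (σ i).Normal) ∧
    (∀ i < n, if c i then (∀ x ∈ σ (i + 1), ∃ k : ℕ, x ^ p ^ k ∈ σ i)
      else (∀ x ∈ σ (i + 1), ∃ k : ℕ, 0 < k ∧ Nat.Coprime k p ∧ x ^ k ∈ σ i)) ∧
    ((Finset.range n).filter fun i => c i = true).card = l

/-- The `p`-length of a (`p`-soluble) finite group: the least number of `p`-group
factors in a normal series all of whose factors are `p`-groups or `p'`-groups. -/
noncomputable def pLength (p : ℕ) (G : Type u) [Group G] : ℕ :=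
  sInf {l | HasPSeriesOfLength p G l}

/-- The factor `B/A` is `p`-soluble. -/
def IsPSolubleFactor (p : ℕ) {G : Type u} [Group G] (A B : Subgroup G) : Prop :=
  ∃ h : (A.subgroupOf B).Normal, haveI := h; IsPSoluble p (B ⧸ A.subgroupOf B)

/-- The factor `B/A` is soluble. -/
def IsSolubleFactor {G : Type u} [Group G] (A B : Subgroup G) : Prop :=
  ∃ h : (A.subgroupOf B).Normal, haveI := h; IsSolvable (B ⧸ A.subgroupOf B)

/-- The factor `B/A` is nilpotent. -/
def IsNilpotentFactor {G : Type u} [Group G] (A B : Subgroup G) : Prop :=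
  ∃ h : (A.subgroupOf B).Normal, haveI := h; Group.IsNilpotent (B ⧸ A.subgroupOf B)

/-- The factor `B/A` is a nonempty direct product of nonabelian simple groups. -/
def IsSimpleProdFactor {G : Type u} [Group G] (A B : Subgroup G) : Prop :=
  ∃ h : (A.subgroupOf B).Normal, haveI := h;
    IsProdOfNonabelianSimples (B ⧸ A.subgroupOf B)

/-- The factor `B/A` is a nonempty direct product of nonabelian simple groups of
order divisible by `p`. -/
def IsSimpleProdFactorDiv (p : ℕ) {G : Type u} [Group G] (A B : Subgroup G) : Prop :=
  ∃ h : (A.subgroupOf B).Normal, haveI := h;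
    IsProdOfNonabelianSimplesDiv p (B ⧸ A.subgroupOf B)

/-- `G` has a normal series `1 = G₀ ≤ G₁ ≤ ⋯ ≤ G_{2h+1} = G` in which the `h+1`
factors `G_{i+1}/G_i` with even `i` are soluble (possibly trivial) and the `h`
factors with odd `i` are (nonempty) direct products of nonabelian simple groups. -/
def HasNonSolubleSeries (G : Type u) [Group G] (h : ℕ) : Prop :=
  ∃ σ : ℕ → Subgroup G, σ 0 = ⊥ ∧ σ (2 * h + 1) = ⊤ ∧
    (∀ i, σ i ≤ σ (i + 1)) ∧ (∀ i, (σ i).Normal) ∧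
    (∀ i ≤ 2 * h, Even i → IsSolubleFactor (σ i) (σ (i + 1))) ∧
    (∀ i ≤ 2 * h, Odd i → IsSimpleProdFactor (σ i) (σ (i + 1)))

/-- The nonsoluble length `λ(G)`: the least `h` such that `G` has a normal series
with `h` nonsoluble factors as above. -/
noncomputable def nonSolubleLength (G : Type u) [Group G] : ℕ :=
  sInf {h | HasNonSolubleSeries G h}

/-- `G` has a normal series `1 = G₀ ≤ G₁ ≤ ⋯ ≤ G_{2h+1} = G` in which the `h+1`
factors `G_{i+1}/G_i` with even `i` are `p`-soluble (possibly trivial) and the `h`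
factors with odd `i` are (nonempty) direct products of nonabelian simple groups of
order divisible by `p`. -/
def HasNonPSolubleSeries (p : ℕ) (G : Type u) [Group G] (h : ℕ) : Prop :=
  ∃ σ : ℕ → Subgroup G, σ 0 = ⊥ ∧ σ (2 * h + 1) = ⊤ ∧
    (∀ i, σ i ≤ σ (i + 1)) ∧ (∀ i, (σ i).Normal) ∧
    (∀ i ≤ 2 * h, Even i → IsPSolubleFactor p (σ i) (σ (i + 1))) ∧
    (∀ i ≤ 2 * h, Odd i → IsSimpleProdFactorDiv p (σ i) (σ (i + 1)))

/-- The non-`p`-soluble length `λ_p(G)`. -/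
noncomputable def nonPSolubleLength (p : ℕ) (G : Type u) [Group G] : ℕ :=
  sInf {h | HasNonPSolubleSeries p G h}

theorem normal_sSup {G : Type u} [Group G] {S : Set (Subgroup G)}
    (hS : ∀ H ∈ S, H.Normal) : (sSup S).Normal := by
  constructor
  intro x hx g
  rw [sSup_eq_iSup'] at hx ⊢
  refine Subgroup.iSup_induction (C := fun y => g * y * g⁻¹ ∈ ⨆ H : S, (H : Subgroup G))
    _ hx ?_ ?_ ?_
  · intro H y hy
    exact Subgroup.mem_iSup_of_mem H ((hS H H.2).conj_mem y hy g)
  · simpa using Subgroup.one_mem _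
  · intro a b ha hb
    have h : g * (a * b) * g⁻¹ = (g * a * g⁻¹) * (g * b * g⁻¹) := by group
    rw [h]; exact mul_mem ha hb

/-- The `p`-soluble radical: the largest normal `p`-soluble subgroup. -/
noncomputable def pSolubleRadical (p : ℕ) (G : Type u) [Group G] : Subgroup G :=
  sSup {H : Subgroup G | H.Normal ∧ IsPSoluble p H}

instance pSolubleRadical_normal (p : ℕ) (G : Type u) [Group G] :
    (pSolubleRadical p G).Normal :=
  normal_sSup fun _ h => h.1

/-- The soluble radical: the largest normal soluble subgroup. -/
noncomputable def solubleRadical (G : Type u) [Group G] : Subgroup G :=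
  sSup {H : Subgroup G | H.Normal ∧ IsSolvable H}

instance solubleRadical_normal (G : Type u) [Group G] : (solubleRadical G).Normal :=
  normal_sSup fun _ h => h.1

/-- `N` is a minimal normal subgroup of `G`. -/
def IsMinimalNormal {G : Type u} [Group G] (N : Subgroup G) : Prop :=
  N.Normal ∧ N ≠ ⊥ ∧ ∀ M : Subgroup G, M.Normal → M ≤ N → M = ⊥ ∨ M = N

/-- The socle: the product of all minimal normal subgroups. -/
noncomputable def socle (G : Type u) [Group G] : Subgroup G :=
  sSup {N : Subgroup G | IsMinimalNormal N}

instance socle_normal (G : Type u) [Group G] : (socle G).Normal :=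
  normal_sSup fun _ h => h.1

/-- The intersection of the normalizers of the simple factors of the socle,
i.e. the kernel of the permutation action on the simple factors of the socle. -/
noncomputable def socleKernel (G : Type u) [Group G] : Subgroup G :=
  ⨅ S ∈ {S : Subgroup G |
      S ≤ socle G ∧ (S.subgroupOf (socle G)).Normal ∧ IsSimpleGroup S},
    Subgroup.normalizer (S : Set G)

theorem mem_map_conj_iff {G : Type u} [Group G] (S : Subgroup G) (a y : G) :
    y ∈ S.map (MulAut.conj a).toMonoidHom ↔ a⁻¹ * y * a ∈ S := by
  simp only [Subgroup.mem_map, MulEquiv.coe_toMonoidHom, MulAut.conj_apply]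
  constructor
  · rintro ⟨s, hs, rfl⟩
    have h : a⁻¹ * (a * s * a⁻¹) * a = s := by group
    rwa [h]
  · intro h
    exact ⟨a⁻¹ * y * a, h, by group⟩

theorem map_conj_eq_of_normal {G : Type u} [Group G] (H : Subgroup G) (hH : H.Normal)
    (a : G) : H.map (MulAut.conj a).toMonoidHom = H := by
  ext y
  rw [mem_map_conj_iff]
  constructor
  · intro h
    have := hH.conj_mem _ h a
    have e : a * (a⁻¹ * y * a) * a⁻¹ = y := by group
    rwa [e] at this
  · intro h
    have := hH.conj_mem _ h a⁻¹
    have e : a⁻¹ * y * (a⁻¹)⁻¹ = a⁻¹ * y * a := by group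
    rwa [e] at this

theorem socleKernel_normal (G : Type u) [Group G] : (socleKernel G).Normal := by
  constructor
  intro x hx g
  simp only [socleKernel, Subgroup.mem_iInf, Set.mem_setOf_eq] at hx ⊢
  rintro S ⟨hle, hnor, hsim⟩
  set f : G ≃* G := MulAut.conj g⁻¹ with hf
  -- the conjugate subgroup
  set S' : Subgroup G := S.map f.toMonoidHom with hS'
  have h1 : S' ≤ socle G := by
    calc S' ≤ (socle G).map f.toMonoidHom := Subgroup.map_mono hle
    _ = socle G := map_conj_eq_of_normal _ (socle_normal G) g⁻¹
  have h2 : (S'.subgroupOf (socle G)).Normal := by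
    constructor
    rintro n hn gs
    rw [Subgroup.mem_subgroupOf] at hn ⊢
    rw [hS', mem_map_conj_iff] at hn ⊢
    -- hn : (g⁻¹)⁻¹ * ↑n * g⁻¹ ∈ S
    have hgsoc : g * (gs : G) * g⁻¹ ∈ socle G := (socle_normal G).conj_mem _ gs.2 g
    have hsmem : ((g⁻¹)⁻¹ * (n : G) * g⁻¹) ∈ socle G := by
      have := (socle_normal G).conj_mem _ n.2 g
      have e : g * (n : G) * g⁻¹ = (g⁻¹)⁻¹ * (n : G) * g⁻¹ := by group
      rwa [e] at this
    have key := hnor.conj_mem (⟨(g⁻¹)⁻¹ * (n : G) * g⁻¹, hsmem⟩ :  socle G)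
      (by rw [Subgroup.mem_subgroupOf]; exact hn) (⟨g * (gs : G) * g⁻¹, hgsoc⟩ : socle G)
    rw [Subgroup.mem_subgroupOf] at key
    simp only [Subgroup.coe_mul, Subgroup.coe_inv] at key ⊢
    have e : (g * (gs:G) * g⁻¹) * ((g⁻¹)⁻¹ * (n:G) * g⁻¹) * (g * (gs:G) * g⁻¹)⁻¹
        = (g⁻¹)⁻¹ * ((gs:G) * (n:G) * (gs:G)⁻¹) * g⁻¹ := by group
    rwa [e] at key
  have h3 : IsSimpleGroup S' := by
    haveI := hsim
    haveI : Nontrivial S := IsSimpleGroup.toNontrivial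
    have e : S ≃* S' := Subgroup.equivMapOfInjective S f.toMonoidHom
      (f.injective)
    haveI : Nontrivial S' := Equiv.nontrivial e.toEquiv.symm
    exact IsSimpleGroup.isSimpleGroup_of_surjective e.toMonoidHom e.surjective
  have hx' := hx S' ⟨h1, h2, h3⟩
  -- now conclude
  rw [Subgroup.mem_normalizer_iff] at hx' ⊢
  intro h
  have step1 : h ∈ S ↔ g⁻¹ * h * g ∈ S' := by
    rw [hS', mem_map_conj_iff]
    constructor
    · intro hh
      have e : (g⁻¹)⁻¹ * (g⁻¹ * h * g) * g⁻¹ = h := by group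
      rwa [e]
    · intro hh
      have e : (g⁻¹)⁻¹ * (g⁻¹ * h * g) * g⁻¹ = h := by group
      rwa [e] at hh
  have step2 : ∀ y, y ∈ S' ↔ x * y * x⁻¹ ∈ S' := hx'
  have step3 : x * (g⁻¹ * h * g) * x⁻¹ ∈ S' ↔ (g * x * g⁻¹) * h * (g * x * g⁻¹)⁻¹ ∈ S := by
    rw [hS', mem_map_conj_iff]
    constructor
    · intro hh
      have e : (g⁻¹)⁻¹ * (x * (g⁻¹ * h * g) * x⁻¹) * g⁻¹
          = (g * x * g⁻¹) * h * (g * x * g⁻¹)⁻¹ := by group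
      rwa [e] at hh
    · intro hh
      have e : (g⁻¹)⁻¹ * (x * (g⁻¹ * h * g) * x⁻¹) * g⁻¹
          = (g * x * g⁻¹) * h * (g * x * g⁻¹)⁻¹ := by group
      rwa [e]
  rw [step1, step2, step3]

/-- The `p`-kernel subgroup `K_p(G)`: the full inverse image in `G` of the
intersection of the normalizers of the simple factors of the socle of
`G/R_p(G)`. -/
noncomputable def pKernel (p : ℕ) (G : Type u) [Group G] : Subgroup G :=
  (socleKernel (G ⧸ pSolubleRadical p G)).comap (QuotientGroup.mk' (pSolubleRadical p G))

instance pKernel_normal (p : ℕ) (G : Type u) [Group G] : (pKernel p G).Normal :=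
  (socleKernel_normal _).comap _

/-- The kernel subgroup `K(G)` (the case `p = 2`, via the soluble radical). -/
noncomputable def kernelSubgroup (G : Type u) [Group G] : Subgroup G :=
  (socleKernel (G ⧸ solubleRadical G)).comap (QuotientGroup.mk' (solubleRadical G))

instance kernelSubgroup_normal (G : Type u) [Group G] : (kernelSubgroup G).Normal :=
  (socleKernel_normal _).comap _

/-- Higher `p`-kernel subgroups together with proofs of their normality. -/
noncomputable def pKernelIterAux (p : ℕ) (G : Type u) [Group G] :
    ℕ → {K : Subgroup G // K.Normal}
  | 0 => ⟨⊥, inferInstance⟩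
  | i + 1 =>
    let prev := pKernelIterAux p G i
    haveI := prev.2
    ⟨(pKernel p (G ⧸ prev.1)).comap (QuotientGroup.mk' prev.1),
      Subgroup.Normal.comap (pKernel_normal _ _) _⟩

/-- The higher `p`-kernel subgroups: `K_{p,0} = 1`, and `K_{p,i+1}` is the full
inverse image in `G` of `K_p(G/K_{p,i})`. -/
noncomputable def pKernelIter (p : ℕ) (G : Type u) [Group G] (i : ℕ) : Subgroup G :=
  (pKernelIterAux p G i).1

/-- `G` has a normal series of length `n` with all factors nilpotent. -/
def HasNilpotentSeries (G : Type u) [Group G] (n : ℕ) : Prop :=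
  ∃ σ : ℕ → Subgroup G, σ 0 = ⊥ ∧ σ n = ⊤ ∧ (∀ i, σ i ≤ σ (i + 1)) ∧
    (∀ i, (σ i).Normal) ∧ ∀ i < n, IsNilpotentFactor (σ i) (σ (i + 1))

/-- The Fitting height: the length of a shortest normal series with nilpotent factors. -/
noncomputable def fittingHeight (G : Type u) [Group G] : ℕ :=
  sInf {n | HasNilpotentSeries G n}

/-- The factor `B/A` is a direct product of a `2`-group and a `2'`-group,
not both trivial. -/
def Is2Cross2'Factor {G : Type u} [Group G] (A B : Subgroup G) : Prop :=
  ∃ h : (A.subgroupOf B).Normal, haveI := h;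
    ∃ T O : Subgroup (B ⧸ A.subgroupOf B), T.Normal ∧ O.Normal ∧
      IsPGroup 2 T ∧ (∀ x : O, Odd (orderOf x)) ∧ Disjoint T O ∧ T ⊔ O = ⊤ ∧
      (T ≠ ⊥ ∨ O ≠ ⊥)

/-- `G` has a `(2 × 2')`-series of length `n`. -/
def Has2Cross2'Series (G : Type u) [Group G] (n : ℕ) : Prop :=
  ∃ σ : ℕ → Subgroup G, σ 0 = ⊥ ∧ σ n = ⊤ ∧ (∀ i, σ i ≤ σ (i + 1)) ∧
    (∀ i, (σ i).Normal) ∧ ∀ i < n, Is2Cross2'Factor (σ i) (σ (i + 1))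

/-- The `(2 × 2')`-length `l_{2×2'}` of a (soluble) group. -/
noncomputable def l2Cross2Length (G : Type u) [Group G] : ℕ :=
  sInf {n | Has2Cross2'Series G n}

/-- `L_{2×2'}(G)`: the maximum of the `(2×2')`-lengths of soluble subgroups of `G`. -/
noncomputable def L2Cross2 (G : Type u) [Group G] : ℕ :=
  sSup {n | ∃ H : Subgroup G, IsSolvable H ∧ l2Cross2Length H = n}

/-- The commutator `[a,b] = a⁻¹b⁻¹ab`. -/
def cmt {G : Type u} [Group G] (a b : G) : G := a⁻¹ * b⁻¹ * a * b

/-- The words `δ_k`: `δ_0(x) = x` and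
`δ_k(x₁,…,x_{2^k}) = [δ_{k-1}(x₁,…,x_{2^{k-1}}), δ_{k-1}(x_{2^{k-1}+1},…,x_{2^k})]`. -/
def deltaWord {G : Type u} [Group G] : (k : ℕ) → (Fin (2 ^ k) → G) → G
  | 0, x => x ⟨0, by norm_num⟩
  | k + 1, x =>
    cmt (deltaWord k fun i => x ⟨i.1, by have := i.2; rw [pow_succ]; omega⟩)
        (deltaWord k fun i => x ⟨2 ^ k + i.1, by have := i.2; rw [pow_succ]; omega⟩)

end Preamble

/-! Suppose `x ∈ N` moves the orbit `Ω` of `S := S i₀` under `⟨g⟩`; then `y := x g^k ∈ N` sends `S`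
outside `Ω`. As `S` is subnormal of order divisible by `p`, there is `1 ≠ s ∈ P ∩ S`, and
`c := ⁅y, s⁻¹⁆ = (y s⁻¹ y⁻¹) s` lies in `N` because `P` normalises `N`. Both `g` and `cg` have order
dividing `p^e = |Ω|`, so `1 = (cg)^{p^e} g^{-p^e} = ∏_{m < p^e} g^m c g^{-m}`. Apart from the `s` in
the factor `m = 0`, every piece of this product lies in a conjugate `g^m y S` or `g^m S` (`0 < m`)
different from `S`, hence in the product of the other `S_j`; so `s ∈ S ∩ ∏_{j ≠ i₀} S_j = 1`. -/

open Pointwise ConjAct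
open scoped commutatorElement

namespace Subgroup

variable {G : Type u} [Group G] [Finite G]

theorem relIndex_dvd_index_of_normal_right (H K : Subgroup G) [K.Normal] :
    H.relIndex K ∣ H.index := by
  obtain ⟨q, hq⟩ := K.relIndex_dvd_index_of_normal H
  have hinf : H.relIndex K * K.index = K.relIndex H * H.index := by
    have h := relIndex_inf_mul_relIndex H K ⊤
    have h' := relIndex_inf_mul_relIndex K H ⊤
    simp only [inf_top_eq, relIndex_top_right] at h h'
    rw [h, h', inf_comm]
  rw [hq, mul_left_comm] at hinf
  exact ⟨q, (Nat.eq_of_mul_eq_mul_left (Nat.pos_of_ne_zero index_ne_zero_of_finite) hinf).symm⟩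

end Subgroup

namespace Sylow

variable {p : ℕ} [Fact p.Prime] {G : Type u} [Group G] [Finite G]

noncomputable def subgroupOf (P : Sylow p G) (N : Subgroup G) [N.Normal] : Sylow p N :=
  (P.isPGroup'.comap_subtype (K := N)).toSylow fun h =>
    P.not_dvd_index (h.trans ((P : Subgroup G).relIndex_dvd_index_of_normal_right N))

theorem exists_mem_ne_one_of_normal (P : Sylow p G) (N : Subgroup G) [N.Normal]
    (hdvd : p ∣ Nat.card N) : ∃ s ∈ (P : Subgroup G), s ∈ N ∧ s ≠ 1 := by
  obtain ⟨⟨s, hs⟩, hs1⟩ :=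
    Subgroup.ne_bot_iff_exists_ne_one.mp ((P.subgroupOf N).ne_bot_of_dvd_card hdvd)
  exact ⟨s, hs, s.2, fun h => hs1 (by ext; simpa using h)⟩

theorem exists_mem_ne_one_of_subnormal (P : Sylow p G) {T V : Subgroup G} [V.Normal]
    (hTV : T ≤ V) (hT : (T.subgroupOf V).Normal) (hdvd : p ∣ Nat.card T) :
    ∃ s ∈ (P : Subgroup G), s ∈ T ∧ s ≠ 1 := by
  have hcard : Nat.card (T.subgroupOf V) = Nat.card T :=
    Nat.card_congr (Subgroup.subgroupOfEquivOfLe hTV).toEquiv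
  obtain ⟨s, hsP, hsT, hs1⟩ := (P.subgroupOf V).exists_mem_ne_one_of_normal _ (hcard ▸ hdvd)
  exact ⟨s, hsP, hsT, fun h => hs1 (Subtype.ext h)⟩

end Sylow

namespace MulAction

theorem pow_smul_ne_self_of_lt_card_orbit {α β : Type*} [Group α] [MulAction α β] {a : α} {b : β}
    {m : ℕ} (hm : 0 < m) (hmn : m < Nat.card (orbit (zpowers a) b)) : a ^ m • b ≠ b := by
  have : Finite (orbit (zpowers a) b) := Nat.finite_of_card_ne_zero (by omega)
  have := Fintype.ofFinite (orbit (zpowers a) b)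
  rw [Ne, pow_smul_eq_iff_minimalPeriod_dvd, minimalPeriod_eq_card, ← Nat.card_eq_fintype_card]
  exact Nat.not_dvd_of_pos_of_lt hm hmn

end MulAction

section conjSubgroup

variable {G : Type u} [Group G]

theorem conjSubgroup_eq_smul (g : G) (H : Subgroup G) :
    conjSubgroup g H = toConjAct g • H := rfl

theorem setOf_conjSubgroup_zpow_eq_orbit (g : G) (H : Subgroup G) :
    {T | ∃ k : ℤ, conjSubgroup (g ^ k) H = T} = MulAction.orbit (zpowers (toConjAct g)) H := by
  ext T
  simp [MulAction.mem_orbit_iff, Subgroup.smul_def, conjSubgroup_eq_smul]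

end conjSubgroup

section conjugateProduct

variable {G : Type u} [Group G]

theorem mul_pow_eq_prod_conj_mul_pow (c g : G) (n : ℕ) :
    (c * g) ^ n = ((List.range n).map fun m => g ^ m * c * (g ^ m)⁻¹).prod * g ^ n := by
  induction n with
  | zero => simp
  | succ n ih =>
    rw [pow_succ, ih, List.range_succ, List.map_append, List.prod_append]
    simp only [List.map_cons, List.map_nil, List.prod_cons, List.prod_nil, mul_one, pow_succ]
    group

theorem mem_of_mul_pow_eq_one {K : Subgroup G} {c g : G} {n : ℕ} (hn : 0 < n) (hg : g ^ n = 1)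
    (hcg : (c * g) ^ n = 1) (hK : ∀ m, 0 < m → m < n → g ^ m * c * (g ^ m)⁻¹ ∈ K) : c ∈ K := by
  obtain ⟨k, rfl⟩ := Nat.exists_eq_add_one_of_ne_zero hn.ne'
  rw [mul_pow_eq_prod_conj_mul_pow, hg, mul_one, List.range_succ_eq_map, List.map_cons,
    List.map_map, List.prod_cons, pow_zero, inv_one, one_mul, mul_one, mul_eq_one_iff_eq_inv] at hcg
  refine hcg ▸ K.inv_mem (K.list_prod_mem fun z hz => ?_)
  obtain ⟨m, hm, rfl⟩ := List.mem_map.mp hz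
  exact hK (m + 1) m.succ_pos (by simpa using hm)

end conjugateProduct

section permutedFactors

variable {G : Type u} [Group G] {ι : Type*} {S : ι → Subgroup G}

theorem smul_le_iSup_ne_of_ne (hperm : ∀ (g : G) i, ∃ j, toConjAct g • S i = S j) {a : G} {i : ι}
    (h : toConjAct a • S i ≠ S i) : toConjAct a • S i ≤ ⨆ (j) (_ : j ≠ i), S j := by
  obtain ⟨j, hj⟩ := hperm a i
  rw [hj] at h ⊢
  exact le_iSup₂_of_le j (fun hji => h (hji ▸ rfl)) le_rfl

theorem eq_one_of_commutator_mul_pow_eq_one (hindep : iSupIndep S)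
    (hperm : ∀ (g : G) i, ∃ j, toConjAct g • S i = S j) {i : ι} {g y s : G} {n : ℕ} (hn : 0 < n)
    (hs : s ∈ S i) (hg : g ^ n = 1) (hcg : (⁅y, s⁻¹⁆ * g) ^ n = 1)
    (hgS : ∀ m, 0 < m → m < n → toConjAct (g ^ m) • S i ≠ S i)
    (hyS : ∀ m : ℕ, toConjAct (g ^ m * y) • S i ≠ S i) : s = 1 := by
  set K := ⨆ (j) (_ : j ≠ i), S j
  have hconj_mem {a b : G} (hb : b ∈ S i) (ha : toConjAct a • S i ≠ S i) : a * b * a⁻¹ ∈ K :=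
    smul_le_iSup_ne_of_ne hperm ha
      (toConjAct_smul a b ▸ Subgroup.smul_mem_pointwise_smul b (toConjAct a) _ hb)
  have ht (m : ℕ) : g ^ m * (y * s⁻¹ * y⁻¹) * (g ^ m)⁻¹ ∈ K := by
    simpa [mul_assoc] using hconj_mem (inv_mem hs) (hyS m)
  have hc : ⁅y, s⁻¹⁆ ∈ K := by
    refine mem_of_mul_pow_eq_one hn hg hcg fun m hm hmn => ?_
    have e : g ^ m * ⁅y, s⁻¹⁆ * (g ^ m)⁻¹ =
        (g ^ m * (y * s⁻¹ * y⁻¹) * (g ^ m)⁻¹) * (g ^ m * s * (g ^ m)⁻¹) := by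
      rw [commutatorElement_def]; group
    exact e ▸ K.mul_mem (ht m) (hconj_mem hs (hgS m hm hmn))
  have hsK : s ∈ K := by
    have e : s = (y * s⁻¹ * y⁻¹)⁻¹ * ⁅y, s⁻¹⁆ := by rw [commutatorElement_def]; group
    exact e ▸ K.mul_mem (K.inv_mem (by simpa using ht 0)) hc
  exact Subgroup.mem_bot.mp ((hindep i).le_bot ⟨hs, hsK⟩)

end permutedFactors

theorem orbit_invariant_of_exponent_general
    (p : ℕ) (hp : p.Prime) (G : Type u) [Group G] [Finite G] (P : Sylow p G)
    (r : ℕ) (S : Fin r → Subgroup G) (V : Subgroup G) (hV : V.Normal)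
    (hSnorm : ∀ i, ((S i).subgroupOf V).Normal)
    (hSdiv : ∀ i, p ∣ Nat.card ↥(S i))
    (hindep : iSupIndep S) (hsup : (⨆ i, S i) = V)
    (hperm : ∀ g : G, ∀ i, ∃ j, conjSubgroup g (S i) = S j)
    (N : Subgroup G) (hNP : N ≤ (P : Subgroup G)) (hNnorm : (N.subgroupOf (P : Subgroup G)).Normal)
    (e : ℕ) (hexp : Monoid.exponent ↥N = p ^ e)
    (g : G) (hg : g ∈ N) (i₀ : Fin r)
    (horb : Set.ncard {T : Subgroup G | ∃ k : ℤ, conjSubgroup (g ^ k) (S i₀) = T} = p ^ e) :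
    ∀ x ∈ N, ∀ T ∈ {T : Subgroup G | ∃ k : ℤ, conjSubgroup (g ^ k) (S i₀) = T},
      conjSubgroup x T ∈ {T : Subgroup G | ∃ k : ℤ, conjSubgroup (g ^ k) (S i₀) = T} := by
  have := Fact.mk hp
  rintro x hx _ ⟨k, rfl⟩
  rw [setOf_conjSubgroup_zpow_eq_orbit] at horb ⊢
  by_contra hxT
  have hpow (z : G) (hz : z ∈ N) : z ^ p ^ e = 1 := by
    have h := Monoid.pow_exponent_eq_one (⟨z, hz⟩ : N)
    rw [hexp] at h
    exact congrArg Subtype.val h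
  obtain ⟨s, hsP, hsS, hs1⟩ :=
    P.exists_mem_ne_one_of_subnormal (hsup ▸ le_iSup S i₀) (hSnorm i₀) (hSdiv i₀)
  set y := x * g ^ k
  have hyN : y ∈ N := N.mul_mem hx (N.zpow_mem hg k)
  have hcN : ⁅y, s⁻¹⁆ ∈ N := by
    have hsN := (normal_subgroupOf_iff_le_normalizer hNP).mp hNnorm (inv_mem hsP)
    have := N.mul_mem hyN ((mem_normalizer_iff.mp hsN y⁻¹).mp (inv_mem hyN))
    simpa [commutatorElement_def, mul_assoc] using this
  refine hs1 (eq_one_of_commutator_mul_pow_eq_one hindep hperm (pow_pos hp.pos e) hsS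
    (hpow g hg) (hpow _ (N.mul_mem hcN hg)) (fun m hm hmn => ?_) (fun m hm => hxT ?_))
  · rw [map_pow]
    exact MulAction.pow_smul_ne_self_of_lt_card_orbit hm (by rwa [Nat.card_coe_set_eq, horb])
  · have hyS : conjSubgroup x (conjSubgroup (g ^ k) (S i₀)) = toConjAct y • S i₀ :=
      (mul_smul (toConjAct x) (toConjAct (g ^ k)) (S i₀)).symm
    rw [hyS]
    refine MulAction.mem_orbit_symm.mp ⟨⟨toConjAct g ^ m, m, zpow_natCast _ _⟩, ?_⟩
    simpa [Subgroup.smul_def, mul_smul] using hm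

/-- Let `V = S₁ × ⋯ × S_r` be a normal subgroup of a finite group `G`
that is a direct product of nonabelian simple subgroups of order divisible by `p`, on
whose set of factors `G` acts by conjugation.  If `N` is a normal subgroup of a Sylow
`p`-subgroup `P` of exponent `p ^ e` and `g ∈ N` has an orbit of length exactly `p ^ e`
on the factors, then this orbit is invariant under `N`. -/
theorem orbit_invariant_of_exponent
    (p : ℕ) (hp : p.Prime) (G : Type u) [Group G] [Finite G] (P : Sylow p G)
    (r : ℕ) (hr : 1 ≤ r) (S : Fin r → Subgroup G) (V : Subgroup G) (hV : V.Normal)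
    (hSnorm : ∀ i, ((S i).subgroupOf V).Normal)
    (hSsimple : ∀ i, IsSimpleGroup ↥(S i))
    (hSnonab : ∀ i, ∃ a b : ↥(S i), a * b ≠ b * a)
    (hSdiv : ∀ i, p ∣ Nat.card ↥(S i))
    (hindep : iSupIndep S) (hsup : (⨆ i, S i) = V)
    (hperm : ∀ g : G, ∀ i, ∃ j, conjSubgroup g (S i) = S j)
    (N : Subgroup G) (hNP : N ≤ (P : Subgroup G)) (hNnorm : (N.subgroupOf (P : Subgroup G)).Normal)
    (e : ℕ) (hexp : Monoid.exponent ↥N = p ^ e)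
    (g : G) (hg : g ∈ N) (i₀ : Fin r)
    (horb : Set.ncard {T : Subgroup G | ∃ k : ℤ, conjSubgroup (g ^ k) (S i₀) = T} = p ^ e) :
    ∀ x ∈ N, ∀ T ∈ {T : Subgroup G | ∃ k : ℤ, conjSubgroup (g ^ k) (S i₀) = T},
      conjSubgroup x T ∈ {T : Subgroup G | ∃ k : ℤ, conjSubgroup (g ^ k) (S i₀) = T} :=
  orbit_invariant_of_exponent_general p hp G P r S V hV hSnorm hSdiv hindep hsup hperm N hNP hNnorm
    e hexp g hg i₀ horb
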